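/- Bounds on the critical value λ_c: assume the Rayleigh–Taylor condition. Then for every ξ ≠ 0 the supremum λ_c(ξ) is finite and satisfies 0 < λ_c(ξ) < g·‖Dθ̄‖_{L^∞([0,1])}/(2μ). -/

import Mathlib

open MeasureTheory Set

noncomputable section

/-- `E₀(W) = μ∫₀¹ (|D²W|² + 2ξ²|DW|² + ξ⁴W²) dx₂` -/
def E0 (μ ξ : ℝ) (W : ℝ → ℝ) : ℝ :=
  μ * ∫ x in Icc (0 : ℝ) 1,
    ((deriv (deriv W) x) ^ 2 + 2 * ξ ^ 2 * (deriv W x) ^ 2 + ξ ^ 4 * (W x) ^ 2)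

/-- `E₁(W) = −k₁(DW(1))² − k₀(DW(0))²` -/
def E1 (k0 k1 : ℝ) (W : ℝ → ℝ) : ℝ :=
  -k1 * (deriv W 1) ^ 2 - k0 * (deriv W 0) ^ 2

/-- `E₂(W) = gξ²∫₀¹ Dθ̄ W² dx₂` -/
def E2 (g ξ : ℝ) (θb : ℝ → ℝ) (W : ℝ → ℝ) : ℝ :=
  g * ξ ^ 2 * ∫ x in Icc (0 : ℝ) 1, deriv θb x * (W x) ^ 2

/-- `E(W; s, ξ) = s·E₀(W) + s·E₁(W) + E₂(W)` -/
def Efun (μ g k0 k1 : ℝ) (θb : ℝ → ℝ) (s ξ : ℝ) (W : ℝ → ℝ) : ℝ :=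
  s * E0 μ ξ W + s * E1 k0 k1 W + E2 g ξ θb W

/-- `J(W) = ∫₀¹ (|DW|² + ξ²W²) dx₂` -/
def Jfun (ξ : ℝ) (W : ℝ → ℝ) : ℝ :=
  ∫ x in Icc (0 : ℝ) 1, ((deriv W x) ^ 2 + ξ ^ 2 * (W x) ^ 2)

/-- admissible set `𝒜_ξ = {W ∈ C²([0,1]) : W(0)=W(1)=0, J(W)=1}` -/
def Adm (ξ : ℝ) : Set (ℝ → ℝ) :=
  {W | ContDiff ℝ 2 W ∧ W 0 = 0 ∧ W 1 = 0 ∧ Jfun ξ W = 1}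

/-- `Φ(s,ξ) = inf_{W ∈ 𝒜_ξ} E(W;s,ξ)` -/
def Phi (μ g k0 k1 : ℝ) (θb : ℝ → ℝ) (s ξ : ℝ) : ℝ :=
  sInf ((fun W => Efun μ g k0 k1 θb s ξ W) '' Adm ξ)

/-- the critical value `λ_c(ξ) = sup{ −E₂(W) : W ∈ C²([0,1]), W(0)=W(1)=0, E₀(W)+E₁(W)=1 }` -/
def lamc (μ g k0 k1 : ℝ) (θb : ℝ → ℝ) (ξ : ℝ) : ℝ :=
  sSup ((fun W : ℝ → ℝ => -E2 g ξ θb W) ''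
    {W | ContDiff ℝ 2 W ∧ W 0 = 0 ∧ W 1 = 0 ∧ E0 μ ξ W + E1 k0 k1 W = 1})

open Metric in
lemma poincare_aux (W : ℝ → ℝ) (hW : ContDiff ℝ 2 W) (h0 : W 0 = 0) :
    ∫ x in Icc (0:ℝ) 1, (W x)^2 ≤ ∫ x in Icc (0:ℝ) 1, (deriv W x)^2 := by
  have hdiff : Differentiable ℝ W := hW.differentiable (by norm_num)
  have hW' : Continuous (deriv W) := hW.continuous_deriv (by norm_num)
  set A := ∫ x in Icc (0:ℝ) 1, (deriv W x)^2 with hA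
  set I := ∫ x in Icc (0:ℝ) 1, |deriv W x| with hI
  have hInn : 0 ≤ I := setIntegral_nonneg measurableSet_Icc (fun x _ => abs_nonneg _)
  have hvol : (volume (Icc (0:ℝ) 1)).toReal = 1 := by
    simp [Real.volume_Icc]
  have key : 2 * I * I ≤ I^2 + A := by
    have h1 : ∫ x in Icc (0:ℝ) 1, (2 * I * |deriv W x|) ≤
        ∫ x in Icc (0:ℝ) 1, (I^2 + (deriv W x)^2) := by
      apply setIntegral_mono_on
      · exact (Continuous.integrableOn_Icc (by continuity))
      · exact (Continuous.integrableOn_Icc (by continuity))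
      · exact measurableSet_Icc
      · intro x _; nlinarith [sq_nonneg (I - |deriv W x|), sq_abs (deriv W x)]
    rw [integral_const_mul] at h1
    rw [integral_add (Continuous.integrableOn_Icc (by continuity))
      (Continuous.integrableOn_Icc (by continuity))] at h1
    simpa [hvol, ← hI, ← hA, mul_comm] using h1
  have hIA : I^2 ≤ A := by nlinarith
  have hpt : ∀ x ∈ Icc (0:ℝ) 1, (W x)^2 ≤ A := by
    intro x hx
    have hftc : ∫ t in (0:ℝ)..x, deriv W t = W x - W 0 :=
      intervalIntegral.integral_deriv_eq_sub (fun t _ => hdiff t)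
        (hW'.intervalIntegrable _ _)
    have habs : |W x| ≤ I := by
      have h2 : |∫ t in (0:ℝ)..x, deriv W t| ≤ ∫ t in (0:ℝ)..x, |deriv W t| := by
        rw [intervalIntegral.integral_of_le hx.1, intervalIntegral.integral_of_le hx.1]
        simpa [Real.norm_eq_abs] using
          norm_integral_le_integral_norm (μ := volume.restrict (Ioc 0 x)) (fun t => deriv W t)
      have h3 : ∫ t in (0:ℝ)..x, |deriv W t| ≤ I := by
        have hsplit : (∫ t in (0:ℝ)..x, |deriv W t|) + ∫ t in x..(1:ℝ), |deriv W t| =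
            ∫ t in (0:ℝ)..(1:ℝ), |deriv W t| :=
          intervalIntegral.integral_add_adjacent_intervals
            (hW'.abs.intervalIntegrable _ _) (hW'.abs.intervalIntegrable _ _)
        have h4 : 0 ≤ ∫ t in x..(1:ℝ), |deriv W t| :=
          intervalIntegral.integral_nonneg hx.2 (fun t _ => abs_nonneg _)
        have h5 : (∫ t in (0:ℝ)..(1:ℝ), |deriv W t|) = I := by
          rw [intervalIntegral.integral_of_le (by norm_num), hI,
            integral_Icc_eq_integral_Ioc]
        linarith
      calc |W x| = |∫ t in (0:ℝ)..x, deriv W t| := by rw [hftc, h0, sub_zero]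
        _ ≤ ∫ t in (0:ℝ)..x, |deriv W t| := h2
        _ ≤ I := h3
    calc (W x)^2 = |W x|^2 := (sq_abs _).symm
      _ ≤ I^2 := by nlinarith [abs_nonneg (W x)]
      _ ≤ A := hIA
  calc ∫ x in Icc (0:ℝ) 1, (W x)^2 ≤ ∫ _x in Icc (0:ℝ) 1, A := by
        apply setIntegral_mono_on
        · exact (Continuous.integrableOn_Icc (hdiff.continuous.pow 2))
        · exact integrableOn_const (by simp [Real.volume_Icc])
        · exact measurableSet_Icc
        · exact hpt
    _ = A := by simp [hvol]

lemma contDiff_one_deriv (W : ℝ → ℝ) (hW : ContDiff ℝ 2 W) : ContDiff ℝ 1 (deriv W) := by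
  have h : ContDiff ℝ (1 + 1 : ℕ) W := by exact_mod_cast hW
  have := contDiff_succ_iff_deriv.mp (by exact_mod_cast h : ContDiff ℝ ((1:WithTop ℕ∞) + 1) W)
  exact this.2.2

lemma deriv_smul_eq (a : ℝ) (W : ℝ → ℝ) (hW : ContDiff ℝ 2 W) :
    deriv (fun x => a * W x) = fun x => a * deriv W x := by
  funext x
  exact deriv_const_mul a ((hW.differentiable (by norm_num)) x)

lemma deriv2_smul_eq (a : ℝ) (W : ℝ → ℝ) (hW : ContDiff ℝ 2 W) :
    deriv (deriv (fun x => a * W x)) = fun x => a * deriv (deriv W) x := by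
  rw [deriv_smul_eq a W hW]
  funext x
  exact deriv_const_mul a (((contDiff_one_deriv W hW).differentiable (by norm_num)) x)

lemma E0_smul (μ ξ a : ℝ) (W : ℝ → ℝ) (hW : ContDiff ℝ 2 W) :
    E0 μ ξ (fun x => a * W x) = a ^ 2 * E0 μ ξ W := by
  unfold E0
  rw [deriv2_smul_eq a W hW, deriv_smul_eq a W hW]
  rw [show (μ * ∫ x in Icc (0:ℝ) 1, ((a * deriv (deriv W) x) ^ 2
      + 2 * ξ ^ 2 * (a * deriv W x) ^ 2 + ξ ^ 4 * (a * W x) ^ 2))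
    = μ * ∫ x in Icc (0:ℝ) 1, a ^ 2 * ((deriv (deriv W) x) ^ 2
      + 2 * ξ ^ 2 * (deriv W x) ^ 2 + ξ ^ 4 * (W x) ^ 2) from by
    congr 1; apply integral_congr_ae; filter_upwards with x; ring]
  rw [integral_const_mul]; ring

lemma E1_smul (k0 k1 a : ℝ) (W : ℝ → ℝ) (hW : ContDiff ℝ 2 W) :
    E1 k0 k1 (fun x => a * W x) = a ^ 2 * E1 k0 k1 W := by
  unfold E1
  rw [deriv_smul_eq a W hW]
  ring

lemma E2_smul (g ξ a : ℝ) (θb W : ℝ → ℝ) :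
    E2 g ξ θb (fun x => a * W x) = a ^ 2 * E2 g ξ θb W := by
  unfold E2
  rw [show (∫ x in Icc (0:ℝ) 1, deriv θb x * (a * W x) ^ 2)
    = ∫ x in Icc (0:ℝ) 1, a ^ 2 * (deriv θb x * (W x) ^ 2) from by
    apply integral_congr_ae; filter_upwards with x; ring]
  rw [integral_const_mul]; ring

lemma upper_bound_aux (μ g k0 k1 : ℝ) (hμ : 0 < μ) (hg : 0 < g)
    (hk0 : k0 ≤ 0) (hk1 : k1 ≤ 0) (θb : ℝ → ℝ) (hθc : Continuous (deriv θb))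
    (ξ : ℝ) (hξ : ξ ≠ 0) (M : ℝ) (hM0 : 0 ≤ M)
    (hM : ∀ x ∈ Icc (0:ℝ) 1, -deriv θb x ≤ M)
    (W : ℝ → ℝ) (hW : ContDiff ℝ 2 W) (h0 : W 0 = 0)
    (hcon : E0 μ ξ W + E1 k0 k1 W = 1) :
    -E2 g ξ θb W ≤ g * M / (μ * (2 + ξ ^ 2)) := by
  have hcW : Continuous W := hW.continuous
  have hcW' : Continuous (deriv W) := hW.continuous_deriv (by norm_num)
  have hcW'' : Continuous (deriv (deriv W)) :=
    (contDiff_one_deriv W hW).continuous_deriv le_rfl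
  set t := ∫ x in Icc (0:ℝ) 1, (W x)^2 with ht
  set A := ∫ x in Icc (0:ℝ) 1, (deriv W x)^2 with hA
  set B := ∫ x in Icc (0:ℝ) 1, (deriv (deriv W) x)^2 with hB
  have ht0 : 0 ≤ t := setIntegral_nonneg measurableSet_Icc (fun x _ => sq_nonneg _)
  have hB0 : 0 ≤ B := setIntegral_nonneg measurableSet_Icc (fun x _ => sq_nonneg _)
  have hAt : t ≤ A := poincare_aux W hW h0
  have hsum : E0 μ ξ W = μ * (B + 2 * ξ ^ 2 * A + ξ ^ 4 * t) := by
    unfold E0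
    have e1 : (∫ x in Icc (0:ℝ) 1, ((deriv (deriv W) x) ^ 2 + 2 * ξ ^ 2 * (deriv W x) ^ 2
        + ξ ^ 4 * (W x) ^ 2))
        = (∫ x in Icc (0:ℝ) 1, ((deriv (deriv W) x) ^ 2 + 2 * ξ ^ 2 * (deriv W x) ^ 2))
          + ∫ x in Icc (0:ℝ) 1, ξ ^ 4 * (W x) ^ 2 :=
      integral_add ((hcW''.pow 2).add ((continuous_const.mul (hcW'.pow 2)))).integrableOn_Icc
        ((continuous_const.mul (hcW.pow 2)).integrableOn_Icc)
    have e2 : (∫ x in Icc (0:ℝ) 1, ((deriv (deriv W) x) ^ 2 + 2 * ξ ^ 2 * (deriv W x) ^ 2))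
        = B + ∫ x in Icc (0:ℝ) 1, 2 * ξ ^ 2 * (deriv W x) ^ 2 :=
      integral_add (hcW''.pow 2).integrableOn_Icc
        ((continuous_const.mul (hcW'.pow 2)).integrableOn_Icc)
    have e3 : (∫ x in Icc (0:ℝ) 1, 2 * ξ ^ 2 * (deriv W x) ^ 2) = 2 * ξ ^ 2 * A :=
      integral_const_mul _ _
    have e4 : (∫ x in Icc (0:ℝ) 1, ξ ^ 4 * (W x) ^ 2) = ξ ^ 4 * t :=
      integral_const_mul _ _
    rw [e1, e2, e3, e4]
  have hE1 : 0 ≤ E1 k0 k1 W := by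
    unfold E1; nlinarith [sq_nonneg (deriv W 1), sq_nonneg (deriv W 0)]
  have hE0le : μ * (B + 2 * ξ ^ 2 * A + ξ ^ 4 * t) ≤ 1 := by
    rw [← hsum]; linarith
  have hE2 : -E2 g ξ θb W ≤ g * ξ ^ 2 * (M * t) := by
    unfold E2
    have h1 : ∫ x in Icc (0:ℝ) 1, (-M) * (W x)^2 ≤
        ∫ x in Icc (0:ℝ) 1, deriv θb x * (W x)^2 := by
      apply setIntegral_mono_on
      · exact (continuous_const.mul (hcW.pow 2)).integrableOn_Icc
      · exact (hθc.mul (hcW.pow 2)).integrableOn_Icc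
      · exact measurableSet_Icc
      · intro x hx
        have := hM x hx
        nlinarith [sq_nonneg (W x)]
    rw [integral_const_mul] at h1
    have hgξ : 0 < g * ξ ^ 2 := by positivity
    nlinarith
  have hξ2 : 0 < ξ ^ 2 := by positivity
  have hkey : μ * ξ ^ 2 * (2 + ξ ^ 2) * t ≤ 1 := by
    nlinarith [mul_nonneg (mul_nonneg hμ.le hξ2.le) (sub_nonneg.2 hAt), mul_nonneg hμ.le hB0]
  rw [le_div_iff₀ (by positivity)]
  have hgM : 0 ≤ g * M := by positivity
  nlinarith [mul_le_mul_of_nonneg_left hkey hgM,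
    mul_le_mul_of_nonneg_right hE2 (show (0:ℝ) ≤ μ * (2 + ξ ^ 2) by positivity)]

open Metric in
lemma exists_witness (θb : ℝ → ℝ) (hθc : Continuous (deriv θb))
    (hRT : ∃ x₀ ∈ Ioo (0 : ℝ) 1, deriv θb x₀ < 0) :
    ∃ W : ℝ → ℝ, ContDiff ℝ 2 W ∧ W 0 = 0 ∧ W 1 = 0 ∧
      (∫ x in Icc (0:ℝ) 1, deriv θb x * (W x) ^ 2) < 0 ∧
      0 < ∫ x in Icc (0:ℝ) 1, (W x) ^ 2 := by
  obtain ⟨x₀, hx₀, hneg⟩ := hRT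
  set c := deriv θb x₀ / 2 with hc
  have hc0 : c < 0 := by simp only [hc]; linarith
  have hUopen : IsOpen ({x | deriv θb x < c} ∩ Ioo 0 1) :=
    (isOpen_lt hθc continuous_const).inter isOpen_Ioo
  have hx₀U : x₀ ∈ {x | deriv θb x < c} ∩ Ioo 0 1 :=
    ⟨by simp only [mem_setOf_eq, hc]; linarith, hx₀⟩
  obtain ⟨r, hr, hball⟩ := Metric.isOpen_iff.mp hUopen x₀ hx₀U
  set f : ContDiffBump x₀ := ⟨r/2, r, by linarith, by linarith⟩ with hf
  have hsupp : Function.support ⇑f = ball x₀ r := f.support_eq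
  have hzero : ∀ y : ℝ, y ∉ Ioo (0:ℝ) 1 → f y = 0 := by
    intro y hy
    by_contra h
    exact hy (hball (hsupp ▸ Function.mem_support.2 h)).2
  set S := Icc (x₀ - r/2) (x₀ + r/2) with hSdef
  have hScb : S = closedBall x₀ (r/2) := Real.closedBall_eq_Icc.symm
  have hSball : S ⊆ ball x₀ r := hScb ▸ closedBall_subset_ball (by linarith)
  have hS01 : S ⊆ Icc (0:ℝ) 1 := fun x hx =>
    Ioo_subset_Icc_self (hball (hSball hx)).2
  have hone : ∀ x ∈ S, f x = 1 := fun x hx =>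
    f.one_of_mem_closedBall (hScb ▸ hx)
  have hvolS : (volume S).toReal = r := by
    rw [hSdef, Real.volume_Icc]
    rw [show x₀ + r/2 - (x₀ - r/2) = r by ring, ENNReal.toReal_ofReal hr.le]
  have hFcont : Continuous (fun x => deriv θb x * (f x) ^ 2) :=
    hθc.mul (f.continuous.pow 2)
  have hFle : ∀ x, deriv θb x * (f x) ^ 2 ≤ 0 := by
    intro x
    by_cases hfx : f x = 0
    · simp [hfx]
    · have hx : x ∈ ball x₀ r := hsupp ▸ Function.mem_support.2 hfx
      have h1 : deriv θb x < c := (hball hx).1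
      nlinarith [sq_nonneg (f x)]
  refine ⟨⇑f, f.contDiff, hzero 0 (by simp), hzero 1 (by simp), ?_, ?_⟩
  · have step1 : (∫ x in Icc (0:ℝ) 1, deriv θb x * (f x) ^ 2) ≤
        ∫ x in S, deriv θb x * (f x) ^ 2 := by
      have h := setIntegral_mono_set (μ := volume)
        (f := fun x => -(deriv θb x * (f x) ^ 2))
        hFcont.neg.integrableOn_Icc
        (Filter.Eventually.of_forall (fun x => by simpa using hFle x))
        (HasSubset.Subset.eventuallyLE hS01)
      simp only [integral_neg] at h
      linarith
    have step2 : (∫ x in S, deriv θb x * (f x) ^ 2) ≤ c * r := by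
      have h := setIntegral_mono_on (μ := volume)
        (f := fun x => deriv θb x * (f x) ^ 2) (g := fun _ => c)
        (hFcont.integrableOn_Icc) (integrableOn_const measure_Icc_lt_top.ne)
        measurableSet_Icc
        (fun x hx => by
          show deriv θb x * (f x) ^ 2 ≤ c
          rw [hone x hx]
          have : deriv θb x < c := (hball (hSball hx)).1
          simpa using this.le)
      rw [setIntegral_const] at h
      calc (∫ x in S, deriv θb x * (f x) ^ 2) ≤ (volume S).toReal • c := h
        _ = c * r := by rw [hvolS, smul_eq_mul]; ring
    have : c * r < 0 := mul_neg_of_neg_of_pos hc0 hr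
    linarith
  · have step1 : (∫ x in S, ((f x):ℝ) ^ 2) ≤ ∫ x in Icc (0:ℝ) 1, (f x) ^ 2 :=
      setIntegral_mono_set (f.continuous.pow 2).integrableOn_Icc
        (Filter.Eventually.of_forall (fun x => sq_nonneg _))
        (HasSubset.Subset.eventuallyLE hS01)
    have step2 : (∫ x in S, ((f x):ℝ) ^ 2) = r := by
      rw [setIntegral_congr_fun measurableSet_Icc
        (fun x hx => by rw [hone x hx]; norm_num : ∀ x ∈ S, ((f x):ℝ)^2 = (1:ℝ))]
      rw [setIntegral_const, smul_eq_mul, mul_one]; exact hvolS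
    linarith [hr]

/-- Bounds on the critical value `λ_c` under the Rayleigh–Taylor condition. -/
theorem lamc_bounds (μ g k0 k1 : ℝ) (hμ : 0 < μ) (hg : 0 < g)
    (hk0 : k0 ≤ 0) (hk1 : k1 ≤ 0) (θb : ℝ → ℝ) (hθb : ContDiff ℝ (⊤ : ℕ∞) θb)
    (hRT : ∃ x₀ ∈ Ioo (0 : ℝ) 1, deriv θb x₀ < 0)
    (ξ : ℝ) (hξ : ξ ≠ 0) :
    BddAbove ((fun W : ℝ → ℝ => -E2 g ξ θb W) ''
      {W | ContDiff ℝ 2 W ∧ W 0 = 0 ∧ W 1 = 0 ∧ E0 μ ξ W + E1 k0 k1 W = 1}) ∧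
    0 < lamc μ g k0 k1 θb ξ ∧
    lamc μ g k0 k1 θb ξ <
      g * sSup ((fun x => |deriv θb x|) '' Icc (0 : ℝ) 1) / (2 * μ) := by
  have hθc : Continuous (deriv θb) := hθb.continuous_deriv (by simp)
  set Mv := sSup ((fun x => |deriv θb x|) '' Icc (0:ℝ) 1) with hMv
  have hMbdd : BddAbove ((fun x => |deriv θb x|) '' Icc (0:ℝ) 1) :=
    (isCompact_Icc.image hθc.abs).bddAbove
  have hMa : ∀ x ∈ Icc (0:ℝ) 1, -deriv θb x ≤ Mv := fun x hx =>
    le_trans (neg_le_abs _) (le_csSup hMbdd ⟨x, hx, rfl⟩)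
  obtain ⟨x₀, hx₀, hneg⟩ := hRT
  have hMpos : 0 < Mv := lt_of_lt_of_le (abs_pos.2 hneg.ne)
    (le_csSup hMbdd ⟨x₀, Ioo_subset_Icc_self hx₀, rfl⟩)
  set C := g * Mv / (μ * (2 + ξ ^ 2)) with hC
  have hub : ∀ y ∈ ((fun W : ℝ → ℝ => -E2 g ξ θb W) ''
      {W | ContDiff ℝ 2 W ∧ W 0 = 0 ∧ W 1 = 0 ∧ E0 μ ξ W + E1 k0 k1 W = 1}), y ≤ C := by
    rintro y ⟨W, ⟨hW, h0, h1, hcon⟩, rfl⟩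
    exact upper_bound_aux μ g k0 k1 hμ hg hk0 hk1 θb hθc ξ hξ Mv hMpos.le hMa W hW h0 hcon
  have hbdd : BddAbove ((fun W : ℝ → ℝ => -E2 g ξ θb W) ''
      {W | ContDiff ℝ 2 W ∧ W 0 = 0 ∧ W 1 = 0 ∧ E0 μ ξ W + E1 k0 k1 W = 1}) := ⟨C, hub⟩
  obtain ⟨W₀, hW₀, h00, h01, hIneg, ht₀⟩ := exists_witness θb hθc ⟨x₀, hx₀, hneg⟩
  have hcW : Continuous W₀ := hW₀.continuous
  have hcW' : Continuous (deriv W₀) := hW₀.continuous_deriv (by norm_num)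
  have hcW'' : Continuous (deriv (deriv W₀)) :=
    (contDiff_one_deriv W₀ hW₀).continuous_deriv le_rfl
  have hE0pos : 0 < E0 μ ξ W₀ := by
    unfold E0
    have h1 : (∫ x in Icc (0:ℝ) 1, ξ ^ 4 * (W₀ x) ^ 2) ≤
        ∫ x in Icc (0:ℝ) 1, ((deriv (deriv W₀) x) ^ 2 + 2 * ξ ^ 2 * (deriv W₀ x) ^ 2
          + ξ ^ 4 * (W₀ x) ^ 2) := by
      apply setIntegral_mono_on
      · exact (continuous_const.mul (hcW.pow 2)).integrableOn_Icc
      · exact (((hcW''.pow 2).add (continuous_const.mul (hcW'.pow 2))).add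
          (continuous_const.mul (hcW.pow 2))).integrableOn_Icc
      · exact measurableSet_Icc
      · intro x _
        nlinarith [sq_nonneg (deriv (deriv W₀) x),
          mul_nonneg (sq_nonneg ξ) (sq_nonneg (deriv W₀ x))]
    have h2 : (∫ x in Icc (0:ℝ) 1, ξ ^ 4 * (W₀ x) ^ 2)
        = ξ ^ 4 * ∫ x in Icc (0:ℝ) 1, (W₀ x) ^ 2 := integral_const_mul _ _
    have h3 : 0 < ξ ^ 4 * ∫ x in Icc (0:ℝ) 1, (W₀ x) ^ 2 := by positivity
    have h4 : 0 < ∫ x in Icc (0:ℝ) 1, ((deriv (deriv W₀) x) ^ 2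
        + 2 * ξ ^ 2 * (deriv W₀ x) ^ 2 + ξ ^ 4 * (W₀ x) ^ 2) := by
      rw [h2] at h1; linarith
    exact mul_pos hμ h4
  have hE1nn : 0 ≤ E1 k0 k1 W₀ := by
    unfold E1; nlinarith [sq_nonneg (deriv W₀ 1), sq_nonneg (deriv W₀ 0)]
  set K := E0 μ ξ W₀ + E1 k0 k1 W₀ with hK
  have hKpos : 0 < K := by rw [hK]; linarith
  set a := (Real.sqrt K)⁻¹ with ha
  have ha2 : a ^ 2 = K⁻¹ := by rw [ha, inv_pow, Real.sq_sqrt hKpos.le]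
  have ha2pos : 0 < a ^ 2 := by rw [ha2]; positivity
  have hmem : (fun x => a * W₀ x) ∈
      {W : ℝ → ℝ | ContDiff ℝ 2 W ∧ W 0 = 0 ∧ W 1 = 0 ∧ E0 μ ξ W + E1 k0 k1 W = 1} := by
    refine ⟨contDiff_const.mul hW₀, by simp [h00], by simp [h01], ?_⟩
    calc E0 μ ξ (fun x => a * W₀ x) + E1 k0 k1 (fun x => a * W₀ x)
        = a ^ 2 * K := by
          rw [E0_smul μ ξ a W₀ hW₀, E1_smul k0 k1 a W₀ hW₀, hK]; ring
      _ = 1 := by rw [ha2]; exact inv_mul_cancel₀ (ne_of_gt hKpos)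
  have hval : -E2 g ξ θb (fun x => a * W₀ x)
      = a ^ 2 * (g * ξ ^ 2 * (-(∫ x in Icc (0:ℝ) 1, deriv θb x * (W₀ x) ^ 2))) := by
    rw [E2_smul g ξ a θb W₀]; unfold E2; ring
  have hvalpos : 0 < -E2 g ξ θb (fun x => a * W₀ x) := by
    rw [hval]
    have hnn : 0 < -(∫ x in Icc (0:ℝ) 1, deriv θb x * (W₀ x) ^ 2) := neg_pos.2 hIneg
    exact mul_pos ha2pos (mul_pos (by positivity) hnn)
  have hmemim : -E2 g ξ θb (fun x => a * W₀ x) ∈ ((fun W : ℝ → ℝ => -E2 g ξ θb W) ''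
      {W | ContDiff ℝ 2 W ∧ W 0 = 0 ∧ W 1 = 0 ∧ E0 μ ξ W + E1 k0 k1 W = 1}) :=
    ⟨_, hmem, rfl⟩
  refine ⟨hbdd, ?_, ?_⟩
  · exact lt_of_lt_of_le hvalpos (le_csSup hbdd hmemim)
  · have h1 : lamc μ g k0 k1 θb ξ ≤ C := by
      unfold lamc
      exact csSup_le ⟨_, hmemim⟩ hub
    have hlt : 2 * μ < μ * (2 + ξ ^ 2) := by
      have hξ2 : 0 < ξ ^ 2 := by positivity
      nlinarith
    have h2 : C < g * Mv / (2 * μ) := by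
      rw [hC]
      exact div_lt_div_of_pos_left (by positivity) (by positivity) hlt
    exact lt_of_le_of_lt h1 h2
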